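/- Let $F(X) = J X + b$ be an affine map on $\mathbb{R}^3$ with $J$ an invertible $3\times 3$ matrix, and let $\Phi : \mathbb{R}^3 \to \mathbb{R}^3$ be differentiable. Define the covariant Piola image $\phi = J^{-T} \Phi \circ F^{-1}$. Then for every $x \in \mathbb{R}^3$, $(\operatorname{curl} \phi)(x) = \frac{1}{\det J}\, J\, (\operatorname{curl} \Phi)(F^{-1}(x))$; that is, the curl of a covariantly mapped field is the contravariant Piola image of the curl. -/

import Mathlib

/-!
The curl of a field at a point depends only on the antisymmetric part of its Jacobian matrix,
through the axial vector of that part. By the chain rule the Jacobian of `φ` at `x` is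
`J⁻ᵀ DΦ(F⁻¹ x) J⁻¹`, and for every `3 × 3` matrix `M` the axial vector of `Mᵀ A M` is `adj M`
applied to the axial vector of `A` (this is the cofactor identity `Ma × Mb = cof M (a × b)`).
It remains to note that `adj J⁻¹ = (det J)⁻¹ J`.
-/

open Matrix

/-- The partial derivative `∂ᵢ f` of a scalar field `f : ℝ³ → ℝ`. -/
noncomputable def pd3 (i : Fin 3) (f : (Fin 3 → ℝ) → ℝ) (x : Fin 3 → ℝ) : ℝ :=
  fderiv ℝ f x (Pi.single i 1)

/-- The curl `(∂₂v₃ - ∂₃v₂, ∂₃v₁ - ∂₁v₃, ∂₁v₂ - ∂₂v₁)` of a vector field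
`v : ℝ³ → ℝ³` (with 0-based indexing). -/
noncomputable def curl3 (v : (Fin 3 → ℝ) → (Fin 3 → ℝ)) (x : Fin 3 → ℝ) : Fin 3 → ℝ :=
  ![pd3 1 (fun y => v y 2) x - pd3 2 (fun y => v y 1) x,
    pd3 2 (fun y => v y 0) x - pd3 0 (fun y => v y 2) x,
    pd3 0 (fun y => v y 1) x - pd3 1 (fun y => v y 0) x]

namespace Matrix

/-- The axial vector of `A - Aᵀ`; for the Jacobian matrix `A` of a field `v` at `x` it is
`curl v x`. -/
def axialVec {R : Type*} [Ring R] (A : Matrix (Fin 3) (Fin 3) R) : Fin 3 → R :=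
  ![A 2 1 - A 1 2, A 0 2 - A 2 0, A 1 0 - A 0 1]

theorem axialVec_transpose_mul_mul {R : Type*} [CommRing R] (M A : Matrix (Fin 3) (Fin 3) R) :
    axialVec (Mᵀ * A * M) = adjugate M *ᵥ axialVec A := by
  ext i
  fin_cases i <;>
    simp only [axialVec, adjugate_fin_three, mul_apply, transpose_apply, mulVec, dotProduct,
      Fin.sum_univ_three, of_apply, cons_val', cons_val_fin_one, cons_val_zero, cons_val_one,
      cons_val, Fin.isValue, Fin.zero_eta, Fin.mk_one, Fin.reduceFinMk] <;>
    ring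

theorem adjugate_nonsing_inv {n K : Type*} [Fintype n] [DecidableEq n] [Field K]
    (A : Matrix n n K) (hn : 2 ≤ Fintype.card n) : adjugate A⁻¹ = A.det⁻¹ • A := by
  obtain ⟨k, hk⟩ := Nat.exists_eq_add_of_le hn
  rw [inv_def, Ring.inverse_eq_inv, adjugate_smul, adjugate_adjugate A (by omega), smul_smul,
    hk, show 2 + k - 1 = k + 1 by omega, show 2 + k - 2 = k by omega]
  congr 1
  rcases eq_or_ne A.det 0 with h | h
  · simp [h]
  · rw [pow_succ, inv_pow, mul_right_comm, inv_mul_cancel₀ (pow_ne_zero k h), one_mul]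

end Matrix

section AffineChange

variable {k l m n : Type*} [Fintype k] [Fintype m] [Fintype n] [DecidableEq k] [DecidableEq m]

theorem hasFDerivAt_mulVec_comp_affine [Fintype l] (P : Matrix l m ℝ) (Q : Matrix n k ℝ)
    (b : k → ℝ) {Φ : (n → ℝ) → m → ℝ} {D : (n → ℝ) →L[ℝ] m → ℝ} {x : k → ℝ}
    (hΦ : HasFDerivAt Φ D (Q *ᵥ (x - b))) :
    HasFDerivAt (fun y => P *ᵥ Φ (Q *ᵥ (y - b)))
      ((toLin' P).toContinuousLinearMap.comp (D.comp (toLin' Q).toContinuousLinearMap)) x := by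
  have hQ : HasFDerivAt (fun y => Q *ᵥ (y - b)) (toLin' Q).toContinuousLinearMap x := by
    simpa [mulVec_sub] using (toLin' Q).toContinuousLinearMap.hasFDerivAt.sub_const (Q *ᵥ b)
  exact (toLin' P).toContinuousLinearMap.hasFDerivAt.comp x (hΦ.comp x hQ)

theorem toMatrix'_toLin'_comp_comp_toLin' [DecidableEq n] (P : Matrix l m ℝ) (Q : Matrix n k ℝ)
    (D : (n → ℝ) →L[ℝ] m → ℝ) :
    LinearMap.toMatrix' ((toLin' P).toContinuousLinearMap.comp
      (D.comp (toLin' Q).toContinuousLinearMap) : (k → ℝ) →ₗ[ℝ] l → ℝ)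
      = P * LinearMap.toMatrix' (D : (n → ℝ) →ₗ[ℝ] m → ℝ) * Q := by
  simp [LinearMap.toMatrix'_comp, Matrix.mul_assoc]

end AffineChange

theorem pd3_apply_eq_toMatrix' {m : Type*} [Fintype m] {v : (Fin 3 → ℝ) → m → ℝ}
    {D : (Fin 3 → ℝ) →L[ℝ] m → ℝ} {x : Fin 3 → ℝ} (hv : HasFDerivAt v D x) (i : Fin 3) (j : m) :
    pd3 i (fun y => v y j) x = LinearMap.toMatrix' (D : (Fin 3 → ℝ) →ₗ[ℝ] m → ℝ) j i := by
  rw [pd3, fderiv_apply hv.differentiableAt, hv.fderiv, LinearMap.toMatrix'_apply]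
  rfl

theorem curl3_eq_axialVec {v : (Fin 3 → ℝ) → Fin 3 → ℝ}
    {D : (Fin 3 → ℝ) →L[ℝ] Fin 3 → ℝ} {x : Fin 3 → ℝ} (hv : HasFDerivAt v D x) :
    curl3 v x = axialVec (LinearMap.toMatrix' (D : (Fin 3 → ℝ) →ₗ[ℝ] Fin 3 → ℝ)) := by
  simp only [curl3, axialVec, pd3_apply_eq_toMatrix' hv]

theorem covariant_piola_curl_commutes_general
    (J : Matrix (Fin 3) (Fin 3) ℝ)
    (b : Fin 3 → ℝ)
    (Finv : (Fin 3 → ℝ) → (Fin 3 → ℝ)) (hFinv : ∀ x, Finv x = J⁻¹.mulVec (x - b))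
    (Φ : (Fin 3 → ℝ) → (Fin 3 → ℝ)) (hΦ : Differentiable ℝ Φ)
    (φ : (Fin 3 → ℝ) → (Fin 3 → ℝ))
    (hφ : ∀ x, φ x = J⁻¹ᵀ.mulVec (Φ (Finv x))) :
    ∀ x, curl3 φ x = (J.det)⁻¹ • J.mulVec (curl3 Φ (Finv x)) := by
  intro x
  obtain rfl : φ = fun y => J⁻¹ᵀ *ᵥ Φ (J⁻¹ *ᵥ (y - b)) := funext fun y => by rw [hφ, hFinv]
  have hD := hasFDerivAt_mulVec_comp_affine J⁻¹ᵀ J⁻¹ b (hΦ (J⁻¹ *ᵥ (x - b))).hasFDerivAt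
  rw [curl3_eq_axialVec hD, hFinv, curl3_eq_axialVec (hΦ _).hasFDerivAt,
    toMatrix'_toLin'_comp_comp_toLin', axialVec_transpose_mul_mul,
    adjugate_nonsing_inv J (by simp), smul_mulVec]

/-- Let `F(X) = J X + b` be affine on `ℝ³` with `J` invertible, and let
`Φ : ℝ³ → ℝ³` be differentiable. For the covariant Piola image `φ = (J⁻¹)ᵀ Φ ∘ F⁻¹`,
one has `(curl φ)(x) = (det J)⁻¹ J (curl Φ)(F⁻¹ x)` for every `x`: the curl of a
covariantly mapped field is the contravariant Piola image of the curl. -/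
theorem covariant_piola_curl_commutes
    (J : Matrix (Fin 3) (Fin 3) ℝ) (hJ : J.det ≠ 0)
    (b : Fin 3 → ℝ)
    (F : (Fin 3 → ℝ) → (Fin 3 → ℝ)) (hF : ∀ X, F X = J.mulVec X + b)
    (Finv : (Fin 3 → ℝ) → (Fin 3 → ℝ)) (hFinv : ∀ x, Finv x = J⁻¹.mulVec (x - b))
    (Φ : (Fin 3 → ℝ) → (Fin 3 → ℝ)) (hΦ : Differentiable ℝ Φ)
    (φ : (Fin 3 → ℝ) → (Fin 3 → ℝ))
    (hφ : ∀ x, φ x = J⁻¹ᵀ.mulVec (Φ (Finv x))) :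
    ∀ x, curl3 φ x = (J.det)⁻¹ • J.mulVec (curl3 Φ (Finv x)) :=
  covariant_piola_curl_commutes_general J b Finv hFinv Φ hΦ φ hφ
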